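/- arXiv:0712.3883 — 3 statements merged into one kernel-verified Lean document; each statement's English description precedes it below -/
import Mathlib

section
/- A matrix A ∈ M_n(ℂ) is unitarily similar to diag(x₁+iy₁, …, x_n+iy_n) (with x_j, y_j real) if and only if L(A,α,β) is unitarily similar to diag(αx₁+iβy₁, …, αx_n+iβy_n), for any fixed nonzero reals α, β. -/
open Matrix Complex

/-- Hermitian part of a complex matrix. -/
noncomputable def Hpart {n : Type*} [Fintype n] [DecidableEq n]
    (A : Matrix n n ℂ) : Matrix n n ℂ := (2:ℂ)⁻¹ • (A + Aᴴ)

/-- Skew-Hermitian part of a complex matrix. -/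
noncomputable def Spart {n : Type*} [Fintype n] [DecidableEq n]
    (A : Matrix n n ℂ) : Matrix n n ℂ := (2:ℂ)⁻¹ • (A - Aᴴ)

/-- Generalized Levinger transformation L(A,α,β) = α H_A + β S_A. -/
noncomputable def Lev {n : Type*} [Fintype n] [DecidableEq n]
    (A : Matrix n n ℂ) (α β : ℝ) : Matrix n n ℂ :=
  (α:ℂ) • Hpart A + (β:ℂ) • Spart A

/-- Numerical range of a complex matrix. -/
def NR {n : Type*} [Fintype n] [DecidableEq n] (A : Matrix n n ℂ) : Set ℂ :=
  {z | ∃ x : n → ℂ, star x ⬝ᵥ x = 1 ∧ z = star x ⬝ᵥ A.mulVec x}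

lemma Lev_conj {n : Type*} [Fintype n] [DecidableEq n]
    (U A : Matrix n n ℂ) (hU : U ∈ Matrix.unitaryGroup n ℂ) (α β : ℝ) :
    Uᴴ * Lev A α β * U = Lev (Uᴴ * A * U) α β := by
  have h1 : Uᴴ * U = 1 := hU.1
  simp only [Lev, Hpart, Spart, Matrix.conjTranspose_mul, Matrix.conjTranspose_conjTranspose,
    Matrix.mul_add, Matrix.add_mul, Matrix.mul_sub, Matrix.sub_mul,
    Matrix.mul_smul, Matrix.smul_mul, Matrix.mul_assoc]


lemma Lev_diag {n : Type*} [Fintype n] [DecidableEq n] (α β : ℝ) (x y : n → ℝ) :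
    Lev (Matrix.diagonal fun j => (x j : ℂ) + (y j : ℂ) * I) α β
      = Matrix.diagonal fun j => ((α * x j : ℝ) : ℂ) + ((β * y j : ℝ) : ℂ) * I := by
  simp only [Lev, Hpart, Spart, Matrix.diagonal_conjTranspose]
  ext i j
  by_cases h : i = j
  · subst h
    simp [Matrix.diagonal_apply_eq, Pi.star_apply, Complex.star_def, map_add, _root_.map_mul,
      Complex.conj_ofReal, Complex.conj_I]
    ring
  · simp [Matrix.diagonal_apply_ne _ h, h]

lemma Lev_Lev {n : Type*} [Fintype n] [DecidableEq n] (A : Matrix n n ℂ)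
    {α β : ℝ} (hα : α ≠ 0) (hβ : β ≠ 0) :
    Lev (Lev A α β) α⁻¹ β⁻¹ = A := by
  have hH : (Lev A α β)ᴴ = (α:ℂ) • Hpart A - (β:ℂ) • Spart A := by
    simp [Lev, Hpart, Spart, Matrix.conjTranspose_smul, Complex.star_def, Complex.conj_ofReal,
      smul_sub, smul_add, smul_smul]
    module
  have ha : (α:ℂ) ≠ 0 := by exact_mod_cast Complex.ofReal_ne_zero.mpr hα
  have hb : (β:ℂ) ≠ 0 := by exact_mod_cast Complex.ofReal_ne_zero.mpr hβ
  have hA : A = Hpart A + Spart A := by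
    simp [Hpart, Spart]; module
  simp only [Lev, Hpart, Spart] at *
  rw [hH]
  push_cast
  rw [smul_add, smul_sub]
  nth_rewrite 5 [hA]
  match_scalars <;> field_simp <;> ring

theorem Lev_unitarily_diagonalizable_iff {n : ℕ} (A : Matrix (Fin n) (Fin n) ℂ)
    (α β : ℝ) (hα : α ≠ 0) (hβ : β ≠ 0) (x y : Fin n → ℝ) :
    (∃ U : Matrix (Fin n) (Fin n) ℂ, U ∈ Matrix.unitaryGroup (Fin n) ℂ ∧
        Uᴴ * A * U = Matrix.diagonal (fun j => ((x j : ℂ) + (y j : ℂ) * I))) ↔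
      (∃ U : Matrix (Fin n) (Fin n) ℂ, U ∈ Matrix.unitaryGroup (Fin n) ℂ ∧
        Uᴴ * Lev A α β * U =
          Matrix.diagonal (fun j => ((α * x j : ℝ) : ℂ) + ((β * y j : ℝ) : ℂ) * I)) := by
  constructor
  · rintro ⟨U, hU, hD⟩
    exact ⟨U, hU, by rw [Lev_conj U A hU, hD, Lev_diag]⟩
  · rintro ⟨U, hU, hD⟩
    refine ⟨U, hU, ?_⟩
    have h1 : Uᴴ * A * U = Lev (Uᴴ * Lev A α β * U) α⁻¹ β⁻¹ := by
      rw [← Lev_conj U _ hU, Lev_Lev A hα hβ]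
    rw [h1, hD]
    have := Lev_diag (n := Fin n) α⁻¹ β⁻¹ (fun j => α * x j) (fun j => β * y j)
    rw [this]
    simp only [inv_mul_cancel_left₀ hα, inv_mul_cancel_left₀ hβ]
end

section
/- For A ∈ M_n(ℂ) and nonzero reals α, β, the intersection of NR[L(A,α,β)] with the real axis equals the intersection of NR[αA] with the real axis. -/
open Matrix Complex

lemma conj_val {n : ℕ} (A : Matrix (Fin n) (Fin n) ℂ) (x : Fin n → ℂ) :
    star x ⬝ᵥ Aᴴ.mulVec x = starRingEnd ℂ (star x ⬝ᵥ A.mulVec x) := by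
  simp [dotProduct, mulVec, conjTranspose_apply, Finset.mul_sum, map_sum]
  rw [Finset.sum_comm]
  congr 1; ext i; congr 1; ext j; ring

lemma lev_val {n : ℕ} (A : Matrix (Fin n) (Fin n) ℂ) (α β : ℝ) (x : Fin n → ℂ) :
    star x ⬝ᵥ (Lev A α β).mulVec x =
      ((α:ℂ)+β)/2 * (star x ⬝ᵥ A.mulVec x)
      + ((α:ℂ)-β)/2 * starRingEnd ℂ (star x ⬝ᵥ A.mulVec x) := by
  rw [← conj_val]
  simp only [Lev, Hpart, Spart, smul_smul, add_mulVec, smul_mulVec,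
    dotProduct_add, dotProduct_smul, sub_mulVec, dotProduct_sub, smul_eq_mul]
  ring

lemma lev_val_im {n : ℕ} (A : Matrix (Fin n) (Fin n) ℂ) (α β : ℝ) (x : Fin n → ℂ) :
    (star x ⬝ᵥ (Lev A α β).mulVec x).im = β * (star x ⬝ᵥ A.mulVec x).im := by
  rw [lev_val]
  have h1 : ((α:ℂ)+β)/2 = ((((α+β)/2 : ℝ)):ℂ) := by push_cast; ring
  have h2 : ((α:ℂ)-β)/2 = ((((α-β)/2 : ℝ)):ℂ) := by push_cast; ring
  rw [h1, h2]
  simp [Complex.add_im, Complex.im_ofReal_mul, Complex.conj_im]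
  ring

lemma smul_val {n : ℕ} (A : Matrix (Fin n) (Fin n) ℂ) (α : ℝ) (x : Fin n → ℂ) :
    star x ⬝ᵥ ((α:ℂ) • A).mulVec x = (α:ℂ) * (star x ⬝ᵥ A.mulVec x) := by
  simp [smul_mulVec]

theorem NR_Lev_inter_real {n : ℕ} (A : Matrix (Fin n) (Fin n) ℂ) (α β : ℝ)
    (hα : α ≠ 0) (hβ : β ≠ 0) :
    NR (Lev A α β) ∩ {z : ℂ | z.im = 0} = NR ((α:ℂ) • A) ∩ {z : ℂ | z.im = 0} := by
  ext z
  simp only [Set.mem_inter_iff, Set.mem_setOf_eq, NR]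
  constructor
  · rintro ⟨⟨x, hx, rfl⟩, him⟩
    have hcim : (star x ⬝ᵥ A.mulVec x).im = 0 := by
      rw [lev_val_im] at him
      exact (mul_eq_zero.mp him).resolve_left hβ
    have hconj : starRingEnd ℂ (star x ⬝ᵥ A.mulVec x) = star x ⬝ᵥ A.mulVec x :=
      Complex.conj_eq_iff_im.mpr hcim
    refine ⟨⟨x, hx, ?_⟩, ?_⟩
    · rw [smul_val, lev_val, hconj]; ring
    · rw [lev_val_im]; rw [hcim]; ring
  · rintro ⟨⟨x, hx, rfl⟩, him⟩
    have hcim : (star x ⬝ᵥ A.mulVec x).im = 0 := by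
      rw [smul_val] at him
      have : α * (star x ⬝ᵥ A.mulVec x).im = 0 := by
        simpa [Complex.im_ofReal_mul] using him
      exact (mul_eq_zero.mp this).resolve_left hα
    have hconj : starRingEnd ℂ (star x ⬝ᵥ A.mulVec x) = star x ⬝ᵥ A.mulVec x :=
      Complex.conj_eq_iff_im.mpr hcim
    refine ⟨⟨x, hx, ?_⟩, him⟩
    rw [smul_val, lev_val, hconj]; ring
end

section
/- Let N ∈ M_n(ℝ) be normal, x ∈ ℝⁿ nonzero, E = xx^T, M = N + E, and R = NE − EN. Then ‖R + R^T‖_F² = 4‖x‖² · x^T(N^T N − N²)x, and the normality defect of M satisfies ‖MM^T − M^T M‖_F = ‖R + R^T‖_F. -/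
open Matrix

/-- Symmetric part of a real matrix. -/
noncomputable def HpartR {n : Type*} [Fintype n] [DecidableEq n]
    (A : Matrix n n ℝ) : Matrix n n ℝ := (2:ℝ)⁻¹ • (A + Aᵀ)

/-- Skew-symmetric part of a real matrix. -/
noncomputable def SpartR {n : Type*} [Fintype n] [DecidableEq n]
    (A : Matrix n n ℝ) : Matrix n n ℝ := (2:ℝ)⁻¹ • (A - Aᵀ)

/-- Generalized Levinger transformation of a real matrix. -/
noncomputable def LevR {n : Type*} [Fintype n] [DecidableEq n]
    (A : Matrix n n ℝ) (α β : ℝ) : Matrix n n ℝ :=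
  α • HpartR A + β • SpartR A

/-- Frobenius norm of a real matrix. -/
noncomputable def frob {n : Type*} [Fintype n] [DecidableEq n]
    (M : Matrix n n ℝ) : ℝ := Real.sqrt (Matrix.trace (M * Mᵀ))

section helpers
variable {m : Type*} [Fintype m]

theorem mul_vmv (A : Matrix m m ℝ) (u v : m → ℝ) :
    A * vecMulVec u v = vecMulVec (A.mulVec u) v := by
  ext i j
  simp [Matrix.mul_apply, vecMulVec_apply, Matrix.mulVec, dotProduct,
    Finset.sum_mul, mul_assoc]

theorem vmv_mul (A : Matrix m m ℝ) (u v : m → ℝ) :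
    vecMulVec u v * A = vecMulVec u (Aᵀ.mulVec v) := by
  ext i j
  simp [Matrix.mul_apply, vecMulVec_apply, Matrix.mulVec, dotProduct,
    Finset.mul_sum, mul_comm, mul_assoc, mul_left_comm]

theorem vmv_mul_vmv (u v w z : m → ℝ) :
    vecMulVec u v * vecMulVec w z = (v ⬝ᵥ w) • vecMulVec u z := by
  ext i j
  simp [Matrix.mul_apply, vecMulVec_apply, dotProduct, Finset.mul_sum,
    Finset.sum_mul]
  ring_nf
  apply Finset.sum_congr rfl
  intro k _
  ring

theorem trace_vmv (u v : m → ℝ) : Matrix.trace (vecMulVec u v) = u ⬝ᵥ v := by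
  simp [Matrix.trace, Matrix.diag, vecMulVec_apply, dotProduct]

omit [Fintype m] in
theorem transpose_vmv (u v : m → ℝ) : (vecMulVec u v)ᵀ = vecMulVec v u := by
  ext i j; simp [vecMulVec_apply, mul_comm]

theorem dp_shift (A : Matrix m m ℝ) (u v : m → ℝ) :
    (Aᵀ.mulVec u) ⬝ᵥ v = u ⬝ᵥ (A.mulVec v) := by
  rw [Matrix.mulVec_transpose, ← Matrix.dotProduct_mulVec]
end helpers

theorem normality_defect_rank_one {n : ℕ} (N : Matrix (Fin n) (Fin n) ℝ)
    (hN : N * Nᵀ = Nᵀ * N) (x : Fin n → ℝ) (hx : x ≠ 0)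
    (E M R : Matrix (Fin n) (Fin n) ℝ)
    (hE : E = Matrix.vecMulVec x x) (hM : M = N + E) (hR : R = N * E - E * N) :
    Matrix.trace ((R + Rᵀ) * (R + Rᵀ)ᵀ) =
      4 * (x ⬝ᵥ x) * (x ⬝ᵥ (Nᵀ * N - N * N).mulVec x) ∧
    frob (M * Mᵀ - Mᵀ * M) = frob (R + Rᵀ) := by
  subst hE hM hR
  set u := N.mulVec x with hu
  set w := Nᵀ.mulVec x with hw
  have c1 : u ⬝ᵥ x = x ⬝ᵥ u := dotProduct_comm _ _
  have c2 : w ⬝ᵥ x = x ⬝ᵥ w := dotProduct_comm _ _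
  have c3 : u ⬝ᵥ w = w ⬝ᵥ u := dotProduct_comm _ _
  have huu : u ⬝ᵥ u = x ⬝ᵥ (Nᵀ.mulVec u) := by
    rw [← dp_shift Nᵀ x u, Matrix.transpose_transpose]
  have h1 : w ⬝ᵥ w = u ⬝ᵥ u := by
    rw [dp_shift N x w, hw, Matrix.mulVec_mulVec, hN, ← Matrix.mulVec_mulVec, huu]
  have h2 : x ⬝ᵥ w = x ⬝ᵥ u := by
    rw [← c2, dp_shift N x x]
  have hRHS : x ⬝ᵥ (Nᵀ * N - N * N).mulVec x = u ⬝ᵥ u - w ⬝ᵥ u := by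
    rw [Matrix.sub_mulVec, dotProduct_sub, ← Matrix.mulVec_mulVec,
      ← Matrix.mulVec_mulVec, ← huu, ← dp_shift N x (N.mulVec x)]
  have hRform : N * vecMulVec x x - vecMulVec x x * N
      = vecMulVec u x - vecMulVec x w := by
    rw [mul_vmv, vmv_mul]
  have hRTform : (N * vecMulVec x x - vecMulVec x x * N)ᵀ
      = vecMulVec x u - vecMulVec w x := by
    rw [hRform, transpose_sub, transpose_vmv, transpose_vmv]
  constructor
  · rw [hRTform, hRform]
    simp only [transpose_add, transpose_sub, transpose_vmv,
      Matrix.sub_mul, Matrix.mul_sub, Matrix.add_mul, Matrix.mul_add,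
      vmv_mul_vmv, Matrix.trace_sub, Matrix.trace_add, Matrix.trace_smul,
      trace_vmv, smul_eq_mul, hRHS]
    simp only [c1, c2, c3, h1, h2]
    ring
  · have key : (N + vecMulVec x x) * (N + vecMulVec x x)ᵀ
        - (N + vecMulVec x x)ᵀ * (N + vecMulVec x x)
      = (N * vecMulVec x x - vecMulVec x x * N)
        + (N * vecMulVec x x - vecMulVec x x * N)ᵀ := by
      simp only [transpose_add, transpose_sub, transpose_mul, transpose_vmv,
        Matrix.add_mul, Matrix.mul_add]
      rw [hN]
      abel
    rw [key]
end
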